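/- arXiv:2309.01524 — 3 statements merged into one kernel-verified Lean document; each statement's English description precedes it below -/
import Mathlib

section
/- Suppose U and X are linear subspaces and define Ũ = { ũ : ũ(t) ∈ U for all t, H_x[0; ũ](t) ∈ X for all t, H[0; ũ] = 0 }. Then an admissible pair (x0, y) is input redundant if and only if Ũ contains a signal that is not almost everywhere zero. Consequently, if one admissible pair is input redundant, then every admissible pair is input redundant (uniform input redundancy). -/
/-!
Call an input feasible for `(x0, y)` if it is locally integrable, meets the input and state
constraints and produces `y` from `x0`. The state and output maps are affine in `(x0, u)`, and
`U`, `X` are subspaces, so feasibility is preserved under superposition: the difference of two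
inputs feasible for `(x0, y)` is feasible for `(0, 0)`, i.e. lies in `Ũ`, and adding an element
of `Ũ` to an input feasible for `(x0, y)` keeps it feasible. Thus for every admissible pair the
feasible inputs form a translate of `Ũ`, and redundancy only depends on whether `Ũ` is trivial.
-/

open MeasureTheory Matrix Set

noncomputable def Hx {n m : ℕ} (A : Matrix (Fin n) (Fin n) ℝ)
    (B : Matrix (Fin n) (Fin m) ℝ) (x0 : Fin n → ℝ) (u : ℝ → Fin m → ℝ) :
    ℝ → Fin n → ℝ :=
  fun t => NormedSpace.exp (t • A) *ᵥ x0 +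
    ∫ τ in (0:ℝ)..t, NormedSpace.exp ((t - τ) • A) *ᵥ (B *ᵥ u τ)

noncomputable def Hout {n m p : ℕ} (A : Matrix (Fin n) (Fin n) ℝ)
    (B : Matrix (Fin n) (Fin m) ℝ) (C : Matrix (Fin p) (Fin n) ℝ)
    (D : Matrix (Fin p) (Fin m) ℝ) (x0 : Fin n → ℝ) (u : ℝ → Fin m → ℝ) :
    ℝ → Fin p → ℝ :=
  fun t => C *ᵥ Hx A B x0 u t + D *ᵥ u t

/-- Admissibility of a pair `(x0, y)`: some locally integrable input satisfies the
input and state constraints and produces `y` from `x0`. -/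
def Adm {n m p : ℕ} (A : Matrix (Fin n) (Fin n) ℝ) (B : Matrix (Fin n) (Fin m) ℝ)
    (C : Matrix (Fin p) (Fin n) ℝ) (D : Matrix (Fin p) (Fin m) ℝ)
    (U : Set (Fin m → ℝ)) (X : Set (Fin n → ℝ)) (x0 : Fin n → ℝ)
    (y : ℝ → Fin p → ℝ) : Prop :=
  ∃ u : ℝ → Fin m → ℝ, LocallyIntegrable u volume ∧
    (∀ t : ℝ, 0 ≤ t → u t ∈ U) ∧ (∀ t : ℝ, 0 ≤ t → Hx A B x0 u t ∈ X) ∧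
    Hout A B C D x0 u = y

/-- Input redundancy of a pair `(x0, y)`: two constraint-satisfying inputs, distinct
on a set of positive measure, produce `y` from `x0`. -/
def IRpair {n m p : ℕ} (A : Matrix (Fin n) (Fin n) ℝ) (B : Matrix (Fin n) (Fin m) ℝ)
    (C : Matrix (Fin p) (Fin n) ℝ) (D : Matrix (Fin p) (Fin m) ℝ)
    (U : Set (Fin m → ℝ)) (X : Set (Fin n → ℝ)) (x0 : Fin n → ℝ)
    (y : ℝ → Fin p → ℝ) : Prop :=
  ∃ u1 u2 : ℝ → Fin m → ℝ,
    LocallyIntegrable u1 volume ∧ LocallyIntegrable u2 volume ∧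
    (∀ t : ℝ, 0 ≤ t → u1 t ∈ U) ∧ (∀ t : ℝ, 0 ≤ t → Hx A B x0 u1 t ∈ X) ∧
    (∀ t : ℝ, 0 ≤ t → u2 t ∈ U) ∧ (∀ t : ℝ, 0 ≤ t → Hx A B x0 u2 t ∈ X) ∧
    Hout A B C D x0 u1 = y ∧ Hout A B C D x0 u2 = y ∧ ¬ u1 =ᵐ[volume] u2

/-- The set `Ũ` of increments: constraint-compatible inputs producing zero output
from zero initial state. -/
def Utilde {n m p : ℕ} (A : Matrix (Fin n) (Fin n) ℝ) (B : Matrix (Fin n) (Fin m) ℝ)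
    (C : Matrix (Fin p) (Fin n) ℝ) (D : Matrix (Fin p) (Fin m) ℝ)
    (U : Set (Fin m → ℝ)) (X : Set (Fin n → ℝ)) : Set (ℝ → Fin m → ℝ) :=
  {ut | LocallyIntegrable ut volume ∧ (∀ t : ℝ, 0 ≤ t → ut t ∈ U) ∧
    (∀ t : ℝ, 0 ≤ t → Hx A B 0 ut t ∈ X) ∧ Hout A B C D 0 ut = 0}

theorem IntervalIntegrable.matrix_mulVec {ι κ : Type*} [Fintype ι] [Fintype κ]
    {f : ℝ → Matrix ι κ ℝ} {u : ℝ → κ → ℝ} {a b : ℝ} (hf : ContinuousOn f (uIcc a b))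
    (hu : IntervalIntegrable u volume a b) :
    IntervalIntegrable (fun τ => f τ *ᵥ u τ) volume a b := by
  have hcols : (fun τ => f τ *ᵥ u τ) = ∑ j, fun τ => u τ j • fun i => f τ i j := by
    ext τ i
    simp [Matrix.mulVec, dotProduct, mul_comm]
  rw [hcols]
  refine IntervalIntegrable.sum _ fun j _ => ?_
  have huj : IntervalIntegrable (fun τ => u τ j) volume a b := by
    rw [intervalIntegrable_iff] at hu ⊢
    exact hu.eval j
  exact huj.smul_continuousOn (continuousOn_pi.2 fun i => by fun_prop)

section
attribute [local instance] Matrix.linftyOpNormedRing Matrix.linftyOpNormedAlgebra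

theorem Matrix.continuous_exp_smul {ι : Type*} [Fintype ι] [DecidableEq ι]
    (A : Matrix ι ι ℝ) : Continuous fun s : ℝ => NormedSpace.exp (s • A) :=
  NormedSpace.exp_continuous.comp (continuous_id.smul continuous_const)

end

theorem intervalIntegrable_Hx_integrand {n m : ℕ} (A : Matrix (Fin n) (Fin n) ℝ)
    (B : Matrix (Fin n) (Fin m) ℝ) {u : ℝ → Fin m → ℝ} (hu : LocallyIntegrable u volume)
    (t : ℝ) :
    IntervalIntegrable (fun τ => NormedSpace.exp ((t - τ) • A) *ᵥ (B *ᵥ u τ)) volume 0 t :=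
  ((hu.integrableOn_isCompact isCompact_uIcc).intervalIntegrable.matrix_mulVec
    continuousOn_const).matrix_mulVec
    (A.continuous_exp_smul.comp (continuous_const.sub continuous_id)).continuousOn

section Superposition

variable {n m p : ℕ} (A : Matrix (Fin n) (Fin n) ℝ) (B : Matrix (Fin n) (Fin m) ℝ)
  (C : Matrix (Fin p) (Fin n) ℝ) (D : Matrix (Fin p) (Fin m) ℝ)
  {x0 x1 : Fin n → ℝ} {u v : ℝ → Fin m → ℝ}

theorem Hx_add (hu : LocallyIntegrable u volume) (hv : LocallyIntegrable v volume) :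
    Hx A B (x0 + x1) (u + v) = Hx A B x0 u + Hx A B x1 v := by
  funext t
  simp only [Hx, Pi.add_apply, mulVec_add]
  rw [intervalIntegral.integral_add (intervalIntegrable_Hx_integrand A B hu t)
    (intervalIntegrable_Hx_integrand A B hv t)]
  abel

theorem Hx_sub (hu : LocallyIntegrable u volume) (hv : LocallyIntegrable v volume) :
    Hx A B (x0 - x1) (u - v) = Hx A B x0 u - Hx A B x1 v := by
  funext t
  simp only [Hx, Pi.sub_apply, mulVec_sub]
  rw [intervalIntegral.integral_sub (intervalIntegrable_Hx_integrand A B hu t)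
    (intervalIntegrable_Hx_integrand A B hv t)]
  abel

theorem Hout_add (hu : LocallyIntegrable u volume) (hv : LocallyIntegrable v volume) :
    Hout A B C D (x0 + x1) (u + v) = Hout A B C D x0 u + Hout A B C D x1 v := by
  funext t
  simp only [Hout, Hx_add A B hu hv, Pi.add_apply, mulVec_add]
  abel

theorem Hout_sub (hu : LocallyIntegrable u volume) (hv : LocallyIntegrable v volume) :
    Hout A B C D (x0 - x1) (u - v) = Hout A B C D x0 u - Hout A B C D x1 v := by
  funext t
  simp only [Hout, Hx_sub A B hu hv, Pi.sub_apply, mulVec_sub]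
  abel

end Superposition

def IsFeasibleInput {n m p : ℕ} (A : Matrix (Fin n) (Fin n) ℝ) (B : Matrix (Fin n) (Fin m) ℝ)
    (C : Matrix (Fin p) (Fin n) ℝ) (D : Matrix (Fin p) (Fin m) ℝ)
    (U : Set (Fin m → ℝ)) (X : Set (Fin n → ℝ)) (x0 : Fin n → ℝ)
    (y : ℝ → Fin p → ℝ) (u : ℝ → Fin m → ℝ) : Prop :=
  LocallyIntegrable u volume ∧ (∀ t : ℝ, 0 ≤ t → u t ∈ U) ∧
    (∀ t : ℝ, 0 ≤ t → Hx A B x0 u t ∈ X) ∧ Hout A B C D x0 u = y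

section FeasibleInputs

variable {n m p : ℕ} {A : Matrix (Fin n) (Fin n) ℝ} {B : Matrix (Fin n) (Fin m) ℝ}
  {C : Matrix (Fin p) (Fin n) ℝ} {D : Matrix (Fin p) (Fin m) ℝ}

theorem IRpair_iff {U : Set (Fin m → ℝ)} {X : Set (Fin n → ℝ)} {x0 : Fin n → ℝ}
    {y : ℝ → Fin p → ℝ} :
    IRpair A B C D U X x0 y ↔ ∃ u1 u2, IsFeasibleInput A B C D U X x0 y u1 ∧
      IsFeasibleInput A B C D U X x0 y u2 ∧ ¬ u1 =ᵐ[volume] u2 := by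
  constructor
  · rintro ⟨u1, u2, h1, h2, hU1, hX1, hU2, hX2, hy1, hy2, hne⟩
    exact ⟨u1, u2, ⟨h1, hU1, hX1, hy1⟩, ⟨h2, hU2, hX2, hy2⟩, hne⟩
  · rintro ⟨u1, u2, ⟨h1, hU1, hX1, hy1⟩, ⟨h2, hU2, hX2, hy2⟩, hne⟩
    exact ⟨u1, u2, h1, h2, hU1, hX1, hU2, hX2, hy1, hy2, hne⟩

variable {U : Submodule ℝ (Fin m → ℝ)} {X : Submodule ℝ (Fin n → ℝ)}
  {x0 x1 : Fin n → ℝ} {y z : ℝ → Fin p → ℝ} {u v : ℝ → Fin m → ℝ}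

theorem IsFeasibleInput.add (hu : IsFeasibleInput A B C D U X x0 y u)
    (hv : IsFeasibleInput A B C D U X x1 z v) :
    IsFeasibleInput A B C D U X (x0 + x1) (y + z) (u + v) := by
  obtain ⟨hu, hUu, hXu, rfl⟩ := hu
  obtain ⟨hv, hUv, hXv, rfl⟩ := hv
  refine ⟨hu.add hv, fun t ht => U.add_mem (hUu t ht) (hUv t ht), fun t ht => ?_,
    Hout_add A B C D hu hv⟩
  rw [Hx_add A B hu hv]
  exact X.add_mem (hXu t ht) (hXv t ht)

theorem IsFeasibleInput.sub (hu : IsFeasibleInput A B C D U X x0 y u)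
    (hv : IsFeasibleInput A B C D U X x1 z v) :
    IsFeasibleInput A B C D U X (x0 - x1) (y - z) (u - v) := by
  obtain ⟨hu, hUu, hXu, rfl⟩ := hu
  obtain ⟨hv, hUv, hXv, rfl⟩ := hv
  refine ⟨hu.sub hv, fun t ht => U.sub_mem (hUu t ht) (hUv t ht), fun t ht => ?_,
    Hout_sub A B C D hu hv⟩
  rw [Hx_sub A B hu hv]
  exact X.sub_mem (hXu t ht) (hXv t ht)

theorem IRpair.exists_mem_Utilde (h : IRpair A B C D U X x0 y) :
    ∃ ut ∈ Utilde A B C D U X, ¬ ut =ᵐ[volume] 0 := by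
  obtain ⟨u1, u2, h1, h2, hne⟩ := IRpair_iff.1 h
  have hdiff := h1.sub h2
  rw [sub_self, sub_self] at hdiff
  exact ⟨u1 - u2, hdiff, fun h0 => hne ((sub_ae_eq_zero _ _).1 h0)⟩

theorem Adm.IRpair_of_mem_Utilde (h : Adm A B C D U X x0 y) {ut : ℝ → Fin m → ℝ}
    (hut : ut ∈ Utilde A B C D U X) (hne : ¬ ut =ᵐ[volume] 0) :
    IRpair A B C D U X x0 y := by
  obtain ⟨u, hu⟩ : ∃ u, IsFeasibleInput A B C D U X x0 y u := h
  have hshift := hu.add (show IsFeasibleInput A B C D U X 0 0 ut from hut)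
  rw [add_zero, add_zero] at hshift
  refine IRpair_iff.2 ⟨u, u + ut, hu, hshift, fun heq => hne ?_⟩
  simpa using (sub_ae_eq_zero _ _).2 heq.symm

end FeasibleInputs

/-- with `U`, `X` linear subspaces, an admissible pair is input
redundant iff `Ũ` contains a signal which is not a.e. zero; consequently input
redundancy of one admissible pair implies it for all admissible pairs. -/
theorem stmt9 {n m p : ℕ} (A : Matrix (Fin n) (Fin n) ℝ)
    (B : Matrix (Fin n) (Fin m) ℝ) (C : Matrix (Fin p) (Fin n) ℝ)
    (D : Matrix (Fin p) (Fin m) ℝ)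
    (U : Submodule ℝ (Fin m → ℝ)) (X : Submodule ℝ (Fin n → ℝ)) :
    (∀ (x0 : Fin n → ℝ) (y : ℝ → Fin p → ℝ),
      Adm A B C D (U : Set (Fin m → ℝ)) (X : Set (Fin n → ℝ)) x0 y →
        (IRpair A B C D (U : Set (Fin m → ℝ)) (X : Set (Fin n → ℝ)) x0 y ↔
          ∃ ut ∈ Utilde A B C D (U : Set (Fin m → ℝ)) (X : Set (Fin n → ℝ)),
            ¬ ut =ᵐ[volume] 0)) ∧
    ((∃ (x0 : Fin n → ℝ) (y : ℝ → Fin p → ℝ),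
        Adm A B C D (U : Set (Fin m → ℝ)) (X : Set (Fin n → ℝ)) x0 y ∧
        IRpair A B C D (U : Set (Fin m → ℝ)) (X : Set (Fin n → ℝ)) x0 y) →
      ∀ (x0 : Fin n → ℝ) (y : ℝ → Fin p → ℝ),
        Adm A B C D (U : Set (Fin m → ℝ)) (X : Set (Fin n → ℝ)) x0 y →
        IRpair A B C D (U : Set (Fin m → ℝ)) (X : Set (Fin n → ℝ)) x0 y) := by
  refine ⟨fun x0 y hadm => ⟨IRpair.exists_mem_Utilde, ?_⟩, ?_⟩
  · rintro ⟨ut, hut, hne⟩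
    exact hadm.IRpair_of_mem_Utilde hut hne
  · rintro ⟨x0', y', -, hir⟩ x0 y hadm
    obtain ⟨ut, hut, hne⟩ := hir.exists_mem_Utilde
    exact hadm.IRpair_of_mem_Utilde hut hne
end

section
/- For the two-buck-converter system ẋ = Ax + Bu with A = [[0,0,-1/L],[0,0,-1/L],[1/C,1/C,-1/(RC)]], B = (V/L)·[[1,0],[0,1],[0,0]], output y = x3, and any initial state x0 ∈ ℝ³: the inputs u1(t) = (max(1−t,0), min(t,1)) and u2(t) = (1, 0) produce identical output trajectories y1 = y2, while u1 ≠ u2 on a positive-measure set. -/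
/-!
Both inputs have total `u₁ + u₂ = 1`, and the projection `P x = (x₁ + x₂, x₃)` of the state
satisfies `P A = M P` for a 2×2 matrix `M`. Hence the difference of the projected trajectories solves
the homogeneous linear ODE `z' = M z` with `z(0) = 0`, so it vanishes by uniqueness of solutions.
The inputs themselves differ on all of `(0, 1)`.
-/

open Matrix MeasureTheory

section LinearSystem

variable {m n k : Type*} [Fintype m] [Fintype n]

theorem eq_zero_of_hasDerivAt_mulVec (M : Matrix m m ℝ) {g : ℝ → m → ℝ}
    (hg : ∀ t, HasDerivAt g (M *ᵥ g t) t) {t₀ : ℝ} (h₀ : g t₀ = 0) : g = 0 :=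
  ODE_solution_unique_univ (v := fun _ ↦ M.mulVecLin.toContinuousLinearMap)
    (s := fun _ ↦ Set.univ) (t₀ := t₀)
    (fun _ ↦ (LinearMap.toContinuousLinearMap _).lipschitz.lipschitzOnWith)
    (fun t ↦ ⟨hg t, trivial⟩)
    (fun _ ↦ ⟨by simp, trivial⟩) h₀

theorem HasDerivAt.const_mulVec (P : Matrix m n ℝ) {x : ℝ → n → ℝ} {x' : n → ℝ} {t : ℝ}
    (hx : HasDerivAt x x' t) : HasDerivAt (fun t ↦ P *ᵥ x t) (P *ᵥ x') t :=
  P.mulVecLin.toContinuousLinearMap.hasFDerivAt.comp_hasDerivAt t hx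

theorem mulVec_eq_mulVec_of_mul_eq_mul [Fintype k] (A : Matrix n n ℝ) (B : Matrix n k ℝ)
    (P : Matrix m n ℝ) (M : Matrix m m ℝ) (hPA : P * A = M * P) {u₁ u₂ : ℝ → k → ℝ}
    (hu : ∀ t, P *ᵥ B *ᵥ u₁ t = P *ᵥ B *ᵥ u₂ t) {x₁ x₂ : ℝ → n → ℝ}
    (hx₁ : ∀ t, HasDerivAt x₁ (A *ᵥ x₁ t + B *ᵥ u₁ t) t)
    (hx₂ : ∀ t, HasDerivAt x₂ (A *ᵥ x₂ t + B *ᵥ u₂ t) t) {t₀ : ℝ} (h₀ : x₁ t₀ = x₂ t₀)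
    (t : ℝ) : P *ᵥ x₁ t = P *ᵥ x₂ t := by
  have hderiv (t : ℝ) :
      HasDerivAt (fun t ↦ P *ᵥ (x₁ t - x₂ t)) (M *ᵥ P *ᵥ (x₁ t - x₂ t)) t := by
    refine (((hx₁ t).sub (hx₂ t)).const_mulVec P).congr_deriv ?_
    rw [mulVec_mulVec, ← hPA, ← mulVec_mulVec]
    simp only [mulVec_sub, mulVec_add, hu]
    abel
  have hzero := eq_zero_of_hasDerivAt_mulVec M hderiv (t₀ := t₀) (by simp [h₀])
  simpa [mulVec_sub, sub_eq_zero] using congrFun hzero t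

end LinearSystem

lemma max_one_sub_zero_add_min_one (t : ℝ) : max (1 - t) 0 + min t 1 = 1 := by
  rcases le_total t 1 with h | h
  · rw [max_eq_left (by linarith), min_eq_left h]; ring
  · rw [max_eq_right (by linarith), min_eq_right h]; ring

theorem stmt12_general (Lc Cc Rc V : ℝ)
    (A : Matrix (Fin 3) (Fin 3) ℝ)
    (hA : A = !![0, 0, -(1/Lc); 0, 0, -(1/Lc); 1/Cc, 1/Cc, -(1/(Rc*Cc))])
    (B : Matrix (Fin 3) (Fin 2) ℝ)
    (hB : B = (V/Lc) • !![1, 0; 0, 1; 0, 0])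
    (u1 u2 : ℝ → Fin 2 → ℝ)
    (hu1 : u1 = fun t => ![max (1 - t) 0, min t 1])
    (hu2 : u2 = fun t => ![1, 0])
    (x0 : Fin 3 → ℝ) (x1 x2 : ℝ → Fin 3 → ℝ)
    (hx10 : x1 0 = x0) (hx20 : x2 0 = x0)
    (hx1 : ∀ t : ℝ, HasDerivAt x1 (A *ᵥ x1 t + B *ᵥ u1 t) t)
    (hx2 : ∀ t : ℝ, HasDerivAt x2 (A *ᵥ x2 t + B *ᵥ u2 t) t) :
    (∀ t : ℝ, 0 ≤ t → x1 t 2 = x2 t 2) ∧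
      0 < volume {t : ℝ | 0 ≤ t ∧ u1 t ≠ u2 t} := by
  set P : Matrix (Fin 2) (Fin 3) ℝ := !![1, 1, 0; 0, 0, 1]
  have hPA : P * A = !![0, -(2/Lc); 1/Cc, -(1/(Rc*Cc))] * P := by
    subst hA
    ext i j
    fin_cases i <;> fin_cases j <;> simp [P, mul_apply, Fin.sum_univ_succ]; ring
  have hu : ∀ t, P *ᵥ B *ᵥ u1 t = P *ᵥ B *ᵥ u2 t := by
    intro t
    ext i
    fin_cases i <;> simp [P, hB, hu1, hu2, mulVec, dotProduct, Fin.sum_univ_succ,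
      ← mul_add, max_one_sub_zero_add_min_one]
  refine ⟨fun t _ ↦ ?_, ?_⟩
  · simpa [P, mulVec, dotProduct, Fin.sum_univ_succ] using
      congrFun (mulVec_eq_mulVec_of_mul_eq_mul A B P _ hPA hu hx1 hx2 (hx10.trans hx20.symm) t) 1
  · have hIoo : Set.Ioo (0 : ℝ) 1 ⊆ {t : ℝ | 0 ≤ t ∧ u1 t ≠ u2 t} := by
      intro t ⟨ht₀, ht₁⟩
      refine ⟨ht₀.le, fun h ↦ ht₀.ne' ?_⟩
      simpa [hu1, hu2, min_eq_left ht₁.le] using congrFun h 1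
    exact (by simp : (0 : ENNReal) < volume (Set.Ioo (0 : ℝ) 1)).trans_le (measure_mono hIoo)

/-- for the two parallel buck converters, the inputs
`u1(t) = (max(1−t,0), min(t,1))` and `u2(t) = (1,0)` produce identical output
trajectories `y = x₃` from any common initial state, while differing on a set of
positive measure. -/
theorem stmt12 (Lc Cc Rc V : ℝ) (hL : 0 < Lc) (hC : 0 < Cc) (hR : 0 < Rc)
    (hV : 0 < V)
    (A : Matrix (Fin 3) (Fin 3) ℝ)
    (hA : A = !![0, 0, -(1/Lc); 0, 0, -(1/Lc); 1/Cc, 1/Cc, -(1/(Rc*Cc))])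
    (B : Matrix (Fin 3) (Fin 2) ℝ)
    (hB : B = (V/Lc) • !![1, 0; 0, 1; 0, 0])
    (u1 u2 : ℝ → Fin 2 → ℝ)
    (hu1 : u1 = fun t => ![max (1 - t) 0, min t 1])
    (hu2 : u2 = fun t => ![1, 0])
    (x0 : Fin 3 → ℝ) (x1 x2 : ℝ → Fin 3 → ℝ)
    (hx10 : x1 0 = x0) (hx20 : x2 0 = x0)
    (hx1 : ∀ t : ℝ, HasDerivAt x1 (A *ᵥ x1 t + B *ᵥ u1 t) t)
    (hx2 : ∀ t : ℝ, HasDerivAt x2 (A *ᵥ x2 t + B *ᵥ u2 t) t) :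
    (∀ t : ℝ, 0 ≤ t → x1 t 2 = x2 t 2) ∧
      0 < volume {t : ℝ | 0 ≤ t ∧ u1 t ≠ u2 t} :=
  stmt12_general Lc Cc Rc V A hA B hB u1 u2 hu1 hu2 x0 x1 x2 hx10 hx20 hx1 hx2
end

section
/- Suppose the unconstrained LTI system Σ is input redundant and ρ := dim(ker B ∩ ker D) > 0, and suppose the input constraint set U ⊆ ℝ^m is open (with X = ℝ^n unconstrained, or more generally X open with ρ > 0). Then every admissible pair (x0, y) of the constrained system is input redundant; i.e., the constrained system is uniformly input redundant. -/
open MeasureTheory Matrix Set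

/-!
Take an admissible input `u` and a nonzero `v ∈ ker B ∩ ker D`. Since `U` is open, every point
`x ∈ U` can be pushed along `v` by an amount `c x > 0`, with `c` continuous and bounded, without
leaving `U`. The input `t ↦ u t + c (u t) • v` is then again locally integrable and `U`-valued,
differs from `u` at every `t ≥ 0`, and since `B` and `D` annihilate `v` it yields the same state
trajectory and the same output.
-/

theorem Matrix.exists_ne_zero_mulVec_eq_zero_of_finrank_ker_inf_pos
    {K ι κ μ : Type*} [Field K] [Fintype ι] [DecidableEq ι]
    (B : Matrix κ ι K) (D : Matrix μ ι K)
    (h : 0 < Module.finrank K ↥(LinearMap.ker (toLin' B) ⊓ LinearMap.ker (toLin' D))) :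
    ∃ v : ι → K, v ≠ 0 ∧ B *ᵥ v = 0 ∧ D *ᵥ v = 0 := by
  have hne : LinearMap.ker (toLin' B) ⊓ LinearMap.ker (toLin' D) ≠ ⊥ := fun hbot => by
    rw [hbot, finrank_bot] at h
    exact h.false
  obtain ⟨v, hv, hv0⟩ := (Submodule.ne_bot_iff _).mp hne
  obtain ⟨hvB, hvD⟩ := Submodule.mem_inf.mp hv
  exact ⟨v, hv0, by simpa using hvB, by simpa using hvD⟩

theorem IsOpen.exists_continuous_pos_add_smul_mem {E : Type*}
    [NormedAddCommGroup E] [NormedSpace ℝ E] {U : Set E} (hU : IsOpen U) (v : E) :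
    ∃ c : E → ℝ, Continuous c ∧ (∀ x, ‖c x‖ ≤ 1) ∧
      ∀ x ∈ U, 0 < c x ∧ x + c x • v ∈ U := by
  rcases (Uᶜ).eq_empty_or_nonempty with hUc | hUc
  · rw [compl_empty_iff] at hUc
    exact ⟨fun _ => 1, continuous_const, fun _ => by simp, fun x _ => by simp [hUc]⟩
  have hv : 0 < ‖v‖ + 1 := by positivity
  refine ⟨fun x => min (Metric.infDist x Uᶜ) 1 / (‖v‖ + 1),
    ((Metric.continuous_infDist_pt _).min continuous_const).div_const _,
    fun x => ?_, fun x hx => ?_⟩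
  · rw [Real.norm_of_nonneg (div_nonneg (le_min Metric.infDist_nonneg zero_le_one) hv.le),
      div_le_one hv]
    linarith [min_le_right (Metric.infDist x Uᶜ) 1, norm_nonneg v]
  have hd : 0 < Metric.infDist x Uᶜ :=
    (hU.isClosed_compl.notMem_iff_infDist_pos hUc).mp (by simpa using hx)
  have hd1 := lt_min hd one_pos
  refine ⟨div_pos hd1 hv, Metric.ball_infDist_compl_subset (x := x) ?_⟩
  have hdle := min_le_left (Metric.infDist x Uᶜ) 1
  rw [Metric.mem_ball, dist_eq_norm, add_sub_cancel_left, norm_smul,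
    Real.norm_of_nonneg (div_pos hd1 hv).le, div_mul_eq_mul_div, div_lt_iff₀ hv]
  nlinarith [norm_nonneg v]

theorem not_ae_eq_of_forall_ne {α β : Type*} [MeasurableSpace α] {μ : Measure α}
    {f g : α → β} {s : Set α} (hs : μ s ≠ 0) (hne : ∀ t ∈ s, f t ≠ g t) : ¬ f =ᵐ[μ] g :=
  fun hfg => hs (measure_mono_null hne (ae_iff.mp hfg))

theorem MeasureTheory.LocallyIntegrable.add_comp_smul {X E : Type*} [MeasurableSpace X]
    [TopologicalSpace X] [SecondCountableTopology X] [NormedAddCommGroup E] [NormedSpace ℝ E]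
    {μ : Measure X} [IsLocallyFiniteMeasure μ] {u : X → E}
    (hu : LocallyIntegrable u μ) {c : E → ℝ} (hc : Continuous c) (hc1 : ∀ x, ‖c x‖ ≤ 1)
    (v : E) : LocallyIntegrable (fun t => u t + c (u t) • v) μ := by
  refine hu.add ((locallyIntegrable_const v).mono
    ((hc.comp_aestronglyMeasurable hu.aestronglyMeasurable).smul_const v) (.of_forall ?_))
  intro t
  rw [norm_smul]
  exact mul_le_of_le_one_left (norm_nonneg v) (hc1 _)

section LTI

variable {n m p : ℕ} (A : Matrix (Fin n) (Fin n) ℝ) {B : Matrix (Fin n) (Fin m) ℝ}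
  (C : Matrix (Fin p) (Fin n) ℝ) {D : Matrix (Fin p) (Fin m) ℝ} (x0 : Fin n → ℝ)
  {u u' : ℝ → Fin m → ℝ}

theorem Hx_congr_of_mulVec_eq (hB : ∀ t, B *ᵥ u t = B *ᵥ u' t) :
    Hx A B x0 u = Hx A B x0 u' := by
  unfold Hx
  simp only [hB]

theorem Hout_congr_of_mulVec_eq (hB : ∀ t, B *ᵥ u t = B *ᵥ u' t)
    (hD : ∀ t, D *ᵥ u t = D *ᵥ u' t) :
    Hout A B C D x0 u = Hout A B C D x0 u' := by
  unfold Hout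
  simp only [Hx_congr_of_mulVec_eq A x0 hB, hD]

end LTI

theorem stmt17_general {n m p : ℕ} (A : Matrix (Fin n) (Fin n) ℝ)
    (B : Matrix (Fin n) (Fin m) ℝ) (C : Matrix (Fin p) (Fin n) ℝ)
    (D : Matrix (Fin p) (Fin m) ℝ)
    (U : Set (Fin m → ℝ)) (X : Set (Fin n → ℝ))
    (hU : IsOpen U)
    (hρ : 0 < Module.finrank ℝ
      ↥(LinearMap.ker (Matrix.toLin' B) ⊓ LinearMap.ker (Matrix.toLin' D))) :
    ∀ (x0 : Fin n → ℝ) (y : ℝ → Fin p → ℝ),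
      Adm A B C D U X x0 y → IRpair A B C D U X x0 y := by
  rintro x0 y ⟨u, hu, huU, huX, rfl⟩
  obtain ⟨v, hv0, hBv, hDv⟩ := exists_ne_zero_mulVec_eq_zero_of_finrank_ker_inf_pos B D hρ
  obtain ⟨c, hc, hc1, hcU⟩ := hU.exists_continuous_pos_add_smul_mem v
  set u' : ℝ → Fin m → ℝ := fun t => u t + c (u t) • v
  have hB : ∀ t, B *ᵥ u' t = B *ᵥ u t := by
    simp only [u', mulVec_add, mulVec_smul, hBv, smul_zero, add_zero, implies_true]
  have hD : ∀ t, D *ᵥ u' t = D *ᵥ u t := by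
    simp only [u', mulVec_add, mulVec_smul, hDv, smul_zero, add_zero, implies_true]
  have hne : ∀ t ∈ Ici (0 : ℝ), u t ≠ u' t := fun t ht h =>
    smul_ne_zero (hcU _ (huU t ht)).1.ne' hv0 (left_eq_add.mp h)
  refine ⟨u, u', hu, hu.add_comp_smul hc hc1 v, huU, huX, fun t ht => (hcU _ (huU t ht)).2,
    Hx_congr_of_mulVec_eq A x0 hB ▸ huX, rfl, Hout_congr_of_mulVec_eq A C x0 hB hD,
    not_ae_eq_of_forall_ne (by simp) hne⟩

/-- if the unconstrained system `Σ` is input redundant,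
`ρ = dim(ker B ∩ ker D) > 0`, and the constraint sets `U` and `X` are open, then
every admissible pair of the constrained system is input redundant (uniform input
redundancy). -/
theorem stmt17 {n m p : ℕ} (A : Matrix (Fin n) (Fin n) ℝ)
    (B : Matrix (Fin n) (Fin m) ℝ) (C : Matrix (Fin p) (Fin n) ℝ)
    (D : Matrix (Fin p) (Fin m) ℝ)
    (U : Set (Fin m → ℝ)) (X : Set (Fin n → ℝ))
    (hU : IsOpen U) (hX : IsOpen X)
    (hρ : 0 < Module.finrank ℝ
      ↥(LinearMap.ker (Matrix.toLin' B) ⊓ LinearMap.ker (Matrix.toLin' D)))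
    (hIRSigma : ∃ (x0 : Fin n → ℝ) (u1 u2 : ℝ → Fin m → ℝ),
      LocallyIntegrable u1 volume ∧ LocallyIntegrable u2 volume ∧
      ¬ u1 =ᵐ[volume] u2 ∧ Hout A B C D x0 u1 = Hout A B C D x0 u2) :
    ∀ (x0 : Fin n → ℝ) (y : ℝ → Fin p → ℝ),
      Adm A B C D U X x0 y → IRpair A B C D U X x0 y :=
  stmt17_general A B C D U X hU hρ
end
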